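/- arXiv:2001.07390 — 14 statements merged into one kernel-verified Lean document; each statement's English description precedes it below -/
import Mathlib

section
/- For a skew-symmetric algebroid (A, ρ, [·,·]) with a symmetric bracket ⟨·:·⟩ and the associated symmetric derivative d^s on tensors, the symmetric Lie derivative satisfies the Cartan-type identity L^s_X = i_X ∘ d^s − d^s ∘ i_X for every section X of A. -/
variable {R : Type} [CommRing R] [Algebra ℝ R]
variable {A : Type} [AddCommGroup A] [Module R A] [Module ℝ A] [IsScalarTower ℝ R A]

/-- The symmetric derivative `d^s` on covariant `k`-tensors induced by an anchor `ρ`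
and a symmetric bracket `sb`. -/
def dS (ρ : A → R → R) (sb : A → A → A) {k : ℕ}
    (Ω : (Fin k → A) → R) : (Fin (k + 1) → A) → R :=
  fun Xs =>
    (∑ j : Fin (k + 1), ρ (Xs j) (Ω (Xs ∘ j.succAbove)))
      - ∑ j : Fin (k + 1), ∑ i : Fin (k + 1),
          if (i : ℕ) < (j : ℕ) then
            Ω ((Function.update Xs j (sb (Xs i) (Xs j))) ∘ i.succAbove)
          else 0

/-- The symmetric Lie derivative `L^s_X` on covariant `k`-tensors. -/
def lS (ρ : A → R → R) (sb : A → A → A) (X : A) {k : ℕ}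
    (Ω : (Fin k → A) → R) : (Fin k → A) → R :=
  fun Xs => ρ X (Ω Xs) - ∑ i : Fin k, Ω (Function.update Xs i (sb X (Xs i)))

/-- The substitution (interior product) operator `i_X`. -/
def iS (X : A) {k : ℕ} (Ω : (Fin (k + 1) → A) → R) : (Fin k → A) → R :=
  fun Xs => Ω (Fin.cons X Xs)

private lemma cons_comp_fsucc {α : Type*} {n : ℕ} (X : α) (Xs : Fin n → α) :
    (Fin.cons X Xs : Fin (n + 1) → α) ∘ Fin.succ = Xs := by
  funext i; simp

private lemma cons_comp_zero {α : Type*} {n : ℕ} (X : α) (Xs : Fin (n + 1) → α) :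
    (Fin.cons X Xs : Fin (n + 2) → α) ∘ (0 : Fin (n + 2)).succAbove = Xs := by
  funext i; simp

private lemma cons_comp_succ {α : Type*} {n : ℕ} (X : α) (Xs : Fin (n + 1) → α)
    (j : Fin (n + 1)) :
    (Fin.cons X Xs : Fin (n + 2) → α) ∘ (j.succ).succAbove
      = Fin.cons X (Xs ∘ j.succAbove) := by
  funext i
  cases i using Fin.cases <;> simp

private lemma upd_cons {α : Type*} {n : ℕ} (X : α) (Xs : Fin (n + 1) → α)
    (j : Fin (n + 1)) (v : α) :
    Function.update (Fin.cons X Xs : Fin (n + 2) → α) j.succ v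
      = Fin.cons X (Function.update Xs j v) := by
  rw [Fin.cons_update]


/-- Cartan-type identity `L^s_X = i_X ∘ d^s − d^s ∘ i_X` for the symmetric Lie
derivative on a skew-symmetric algebroid with a symmetric bracket. -/
theorem symmetric_cartan_formula
    (ρ : A → R → R) (br sb : A → A → A)
    (hρ_add : ∀ X Y f, ρ (X + Y) f = ρ X f + ρ Y f)
    (hρ_smulR : ∀ (c : R) X f, ρ (c • X) f = c * ρ X f)
    (hρ_map_add : ∀ X f g, ρ X (f + g) = ρ X f + ρ X g)
    (hρ_map_smul : ∀ X (c : ℝ) f, ρ X (c • f) = c • ρ X f)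
    (hρ_deriv : ∀ X f g, ρ X (f * g) = f * ρ X g + g * ρ X f)
    (hbr_skew : ∀ X Y, br X Y = - br Y X)
    (hbr_addl : ∀ X Y Z, br (X + Y) Z = br X Z + br Y Z)
    (hbr_smul : ∀ (c : ℝ) X Y, br (c • X) Y = c • br X Y)
    (hbr_leib : ∀ X (f : R) Y, br X (f • Y) = f • br X Y + ρ X f • Y)
    (hsb_symm : ∀ X Y, sb X Y = sb Y X)
    (hsb_addl : ∀ X Y Z, sb (X + Y) Z = sb X Z + sb Y Z)
    (hsb_smul : ∀ (c : ℝ) X Y, sb (c • X) Y = c • sb X Y)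
    (hsb_leib : ∀ X (f : R) Y, sb X (f • Y) = f • sb X Y + ρ X f • Y) :
    ∀ {k : ℕ} (X : A) (Ω : (Fin (k + 1) → A) → R),
      lS ρ sb X Ω = iS X (dS ρ sb Ω) - dS ρ sb (iS X Ω) := by
  intro k X Ω
  funext Xs
  simp only [lS, iS, dS, Pi.sub_apply]
  have e1 : (∑ j : Fin (k + 2),
        ρ ((Fin.cons X Xs : Fin (k + 2) → A) j) (Ω ((Fin.cons X Xs : Fin (k + 2) → A) ∘ j.succAbove)))
      = ρ X (Ω Xs)
        + ∑ j : Fin (k + 1), ρ (Xs j) (Ω (Fin.cons X (Xs ∘ j.succAbove))) := by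
    rw [Fin.sum_univ_succ, Fin.succAbove_zero, cons_comp_fsucc]
    simp only [Fin.cons_zero, Fin.cons_succ, cons_comp_succ]
  have e2 : (∑ j : Fin (k + 2), ∑ i : Fin (k + 2),
        if (i : ℕ) < (j : ℕ) then
          Ω ((Function.update (Fin.cons X Xs : Fin (k + 2) → A) j
              (sb ((Fin.cons X Xs : Fin (k + 2) → A) i) ((Fin.cons X Xs : Fin (k + 2) → A) j))) ∘ i.succAbove)
        else 0)
      = (∑ j : Fin (k + 1), Ω (Function.update Xs j (sb X (Xs j))))
        + ∑ j : Fin (k + 1), ∑ i : Fin (k + 1),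
            if (i : ℕ) < (j : ℕ) then
              Ω (Fin.cons X ((Function.update Xs j (sb (Xs i) (Xs j))) ∘ i.succAbove))
            else 0 := by
    rw [Fin.sum_univ_succ]
    simp only [Fin.val_zero, Nat.not_lt_zero, if_false, Finset.sum_const_zero, zero_add]
    rw [← Finset.sum_add_distrib]
    refine Finset.sum_congr rfl fun j _ => ?_
    rw [Fin.sum_univ_succ]
    congr 1
    · rw [if_pos (by simp)]
      rw [Fin.cons_zero, Fin.cons_succ, upd_cons, Fin.succAbove_zero, cons_comp_fsucc]
    · refine Finset.sum_congr rfl fun i _ => ?_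
      simp only [Fin.val_succ, Fin.cons_succ, upd_cons, cons_comp_succ,
        Nat.add_lt_add_iff_right]
  rw [e1, e2]
  ring
end

section
/- For a skew-symmetric algebroid with a symmetric bracket, the symmetric Lie derivative and substitution operators satisfy the commutation relation L^s_X ∘ i_Y − i_Y ∘ L^s_X = i_{⟨X:Y⟩} on covariant tensors, for all sections X, Y of A. -/
variable {R : Type} [CommRing R] [Algebra ℝ R]
variable {A : Type} [AddCommGroup A] [Module R A] [Module ℝ A] [IsScalarTower ℝ R A]

/-- Commutation relation `L^s_X ∘ i_Y − i_Y ∘ L^s_X = i_{⟨X:Y⟩}` on covariant tensors. -/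
theorem symmetric_lie_derivative_substitution_commutator
    (ρ : A → R → R) (br sb : A → A → A)
    (hρ_add : ∀ X Y f, ρ (X + Y) f = ρ X f + ρ Y f)
    (hρ_smulR : ∀ (c : R) X f, ρ (c • X) f = c * ρ X f)
    (hρ_map_add : ∀ X f g, ρ X (f + g) = ρ X f + ρ X g)
    (hρ_map_smul : ∀ X (c : ℝ) f, ρ X (c • f) = c • ρ X f)
    (hρ_deriv : ∀ X f g, ρ X (f * g) = f * ρ X g + g * ρ X f)
    (hbr_skew : ∀ X Y, br X Y = - br Y X)
    (hbr_addl : ∀ X Y Z, br (X + Y) Z = br X Z + br Y Z)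
    (hbr_smul : ∀ (c : ℝ) X Y, br (c • X) Y = c • br X Y)
    (hbr_leib : ∀ X (f : R) Y, br X (f • Y) = f • br X Y + ρ X f • Y)
    (hsb_symm : ∀ X Y, sb X Y = sb Y X)
    (hsb_addl : ∀ X Y Z, sb (X + Y) Z = sb X Z + sb Y Z)
    (hsb_smul : ∀ (c : ℝ) X Y, sb (c • X) Y = c • sb X Y)
    (hsb_leib : ∀ X (f : R) Y, sb X (f • Y) = f • sb X Y + ρ X f • Y) :
    ∀ {k : ℕ} (X Y : A) (Ω : (Fin (k + 1) → A) → R),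
      lS ρ sb X (iS Y Ω) - iS Y (lS ρ sb X Ω) = iS (sb X Y) Ω := by
  intro k X Y Ω
  funext Xs
  simp only [lS, iS, Pi.sub_apply, Fin.sum_univ_succ, Fin.cons_zero, Fin.cons_succ,
    Fin.update_cons_zero, ← Fin.cons_update]
  ring
end

section
/- Let (A, ρ, [·,·]) be a skew-symmetric algebroid with a pseudo-Riemannian fiber metric g and an A-connection ∇ in A with torsion T^∇. Then for all X, Z ∈ Γ(A): g(∇_X X, Z) = g(♯(L^a_X X♭ − ½ d^a(g(X,X))), Z) − g(T^∇(X,Z), X) + (∇g)(Z,X,X) − ½ (d^s g)(X,X,Z), where d^s is the symmetrization of ∇ on symmetric 2-tensors. -/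
variable {R : Type} [CommRing R] [Algebra ℝ R]
variable {A : Type} [AddCommGroup A] [Module R A] [Module ℝ A] [IsScalarTower ℝ R A]

/-- The (alternating) Lie derivative of a 1-form: `(L^a_X ω)(Z) = ρ(X)(ω(Z)) − ω([X,Z])`. -/
def lA1 (ρ : A → R → R) (br : A → A → A) (X : A) (ω : A → R) : A → R :=
  fun Z => ρ X (ω Z) - ω (br X Z)

/-- The musical map `♭`: `X♭ = g(X,·)`. -/
def flat (g : A → A → R) (X : A) : A → R := fun Z => g X Z

/-- The differential of a function: `(d f)(Z) = ρ(Z)(f)`. -/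
def dFun (ρ : A → R → R) (f : R) : A → R := fun Z => ρ Z f

/-- The torsion of a connection: `T(X,Y) = ∇_X Y − ∇_Y X − [X,Y]`. -/
def Tor (br D : A → A → A) (X Y : A) : A := D X Y - D Y X - br X Y

/-- The covariant derivative of the metric: `(∇g)(Z,X,Y)`. -/
def covG (ρ : A → R → R) (g : A → A → R) (D : A → A → A) (Z X Y : A) : R :=
  ρ Z (g X Y) - g (D Z X) Y - g X (D Z Y)

/-- The symmetrized covariant derivative of the metric:
`(d^s g)(X,Y,Z) = (∇_X g)(Y,Z) + (∇_Y g)(X,Z) + (∇_Z g)(X,Y)`. -/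
def dsG (ρ : A → R → R) (g : A → A → R) (D : A → A → A) (X Y Z : A) : R :=
  covG ρ g D X Y Z + covG ρ g D Y X Z + covG ρ g D Z X Y

/-- Theorem 4.1: expression of `g(∇_X X, Z)` for an arbitrary `A`-connection. -/
theorem g_conn_diagonal_formula
    (ρ : A → R → R) (br : A → A → A)
    (hρ_add : ∀ X Y f, ρ (X + Y) f = ρ X f + ρ Y f)
    (hρ_smulR : ∀ (c : R) X f, ρ (c • X) f = c * ρ X f)
    (hρ_map_add : ∀ X f g, ρ X (f + g) = ρ X f + ρ X g)
    (hρ_map_smul : ∀ X (c : ℝ) f, ρ X (c • f) = c • ρ X f)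
    (hρ_deriv : ∀ X f g, ρ X (f * g) = f * ρ X g + g * ρ X f)
    (hbr_skew : ∀ X Y, br X Y = - br Y X)
    (hbr_addl : ∀ X Y Z, br (X + Y) Z = br X Z + br Y Z)
    (hbr_smul : ∀ (c : ℝ) X Y, br (c • X) Y = c • br X Y)
    (hbr_leib : ∀ X (f : R) Y, br X (f • Y) = f • br X Y + ρ X f • Y)
    (g : A → A → R) (sharp : (A → R) → A)
    (hg_symm : ∀ X Y, g X Y = g Y X)
    (hg_addl : ∀ X Y Z, g (X + Y) Z = g X Z + g Y Z)
    (hg_smull : ∀ (f : R) X Z, g (f • X) Z = f * g X Z)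
    (hg_nondeg : ∀ X Y, (∀ Z, g X Z = g Y Z) → X = Y)
    (hsharp : ∀ ω : A → R, (∀ X Y, ω (X + Y) = ω X + ω Y) →
      (∀ (f : R) X, ω (f • X) = f * ω X) → ∀ Z, g (sharp ω) Z = ω Z)
    (D : A → A → A)
    (hD_addl : ∀ X Y Z, D (X + Y) Z = D X Z + D Y Z)
    (hD_smull : ∀ (f : R) X Y, D (f • X) Y = f • D X Y)
    (hD_addr : ∀ X Y Z, D X (Y + Z) = D X Y + D X Z)
    (hD_leib : ∀ X (f : R) Y, D X (f • Y) = f • D X Y + ρ X f • Y)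
    (X Z : A) :
    g (D X X) Z =
      g (sharp (fun W => lA1 ρ br X (flat g X) W - (2 : ℝ)⁻¹ • dFun ρ (g X X) W)) Z
        - g (Tor br D X Z) X
        + covG ρ g D Z X X - (2 : ℝ)⁻¹ • dsG ρ g D X X Z := by
  have hg_addr : ∀ X Y Z, g X (Y + Z) = g X Y + g X Z := by
    intro a b c; rw [hg_symm, hg_addl, hg_symm b, hg_symm c]
  have hg_smulr : ∀ (f : R) X Z, g X (f • Z) = f * g X Z := by
    intro f a b; rw [hg_symm, hg_smull, hg_symm]
  have hg_subl : ∀ X Y Z, g (X - Y) Z = g X Z - g Y Z := by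
    intro a b c
    have h : a - b = a + (-1 : R) • b := by rw [neg_one_smul]; abel
    rw [h, hg_addl, hg_smull]; ring
  have hbr_addr : ∀ X Y Z, br X (Y + Z) = br X Y + br X Z := by
    intro a b c
    rw [hbr_skew, hbr_addl, hbr_skew b a, hbr_skew c a]; abel
  set ω : A → R := fun W => lA1 ρ br X (flat g X) W - (2 : ℝ)⁻¹ • dFun ρ (g X X) W with hω
  have hadd : ∀ U V, ω (U + V) = ω U + ω V := by
    intro U V
    simp only [hω, lA1, flat, dFun, hg_addr, hρ_map_add, hbr_addr, hρ_add, smul_add]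
    ring
  have hsmul : ∀ (f : R) U, ω (f • U) = f * ω U := by
    intro f U
    simp only [hω, lA1, flat, dFun, hg_smulr, hρ_deriv, hbr_leib, hg_addr, hρ_smulR,
      Algebra.smul_def]
    ring
  rw [hsharp ω hadd hsmul Z]
  simp only [hω, lA1, flat, dFun, Tor, covG, dsG, hg_subl, Algebra.smul_def,
    hg_symm X (D X Z), hg_symm X (D Z X), hg_symm X (br X Z), hg_symm X (D X X)]
  set c : R := algebraMap ℝ R 2⁻¹ with hcdef
  have hc : c + c = 1 := by rw [hcdef, ← map_add]; norm_num
  linear_combination (ρ X (g X Z) + ρ Z (g X X) - g (D X X) Z - g (D X Z) X - g (D Z X) X) * hc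
end

section
/- If ∇ is an A-connection with totally skew-symmetric torsion that is compatible with the pseudo-Riemannian metric g (∇g = 0), then for every section X of A: ∇_X X = ♯(L^a_X X♭ − ½ d^a(g(X,X))). -/
variable {R : Type} [CommRing R] [Algebra ℝ R]
variable {A : Type} [AddCommGroup A] [Module R A] [Module ℝ A] [IsScalarTower ℝ R A]

/-- For a metric connection with totally skew-symmetric torsion,
`∇_X X = ♯(L^a_X X♭ − ½ d^a(g(X,X)))`. -/
theorem metric_skew_torsion_diagonal
    (ρ : A → R → R) (br : A → A → A)
    (hρ_add : ∀ X Y f, ρ (X + Y) f = ρ X f + ρ Y f)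
    (hρ_smulR : ∀ (c : R) X f, ρ (c • X) f = c * ρ X f)
    (hρ_map_add : ∀ X f g, ρ X (f + g) = ρ X f + ρ X g)
    (hρ_map_smul : ∀ X (c : ℝ) f, ρ X (c • f) = c • ρ X f)
    (hρ_deriv : ∀ X f g, ρ X (f * g) = f * ρ X g + g * ρ X f)
    (hbr_skew : ∀ X Y, br X Y = - br Y X)
    (hbr_addl : ∀ X Y Z, br (X + Y) Z = br X Z + br Y Z)
    (hbr_smul : ∀ (c : ℝ) X Y, br (c • X) Y = c • br X Y)
    (hbr_leib : ∀ X (f : R) Y, br X (f • Y) = f • br X Y + ρ X f • Y)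
    (g : A → A → R) (sharp : (A → R) → A)
    (hg_symm : ∀ X Y, g X Y = g Y X)
    (hg_addl : ∀ X Y Z, g (X + Y) Z = g X Z + g Y Z)
    (hg_smull : ∀ (f : R) X Z, g (f • X) Z = f * g X Z)
    (hg_nondeg : ∀ X Y, (∀ Z, g X Z = g Y Z) → X = Y)
    (hsharp : ∀ ω : A → R, (∀ X Y, ω (X + Y) = ω X + ω Y) →
      (∀ (f : R) X, ω (f • X) = f * ω X) → ∀ Z, g (sharp ω) Z = ω Z)
    (D : A → A → A)
    (hD_addl : ∀ X Y Z, D (X + Y) Z = D X Z + D Y Z)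
    (hD_smull : ∀ (f : R) X Y, D (f • X) Y = f • D X Y)
    (hD_addr : ∀ X Y Z, D X (Y + Z) = D X Y + D X Z)
    (hD_leib : ∀ X (f : R) Y, D X (f • Y) = f • D X Y + ρ X f • Y)
    (hmetric : ∀ Z X Y, ρ Z (g X Y) = g (D Z X) Y + g X (D Z Y))
    (hskew_tor : ∀ X Y Z, g (Tor br D X Y) Z = - g (Tor br D X Z) Y)
    (X : A) :
    D X X = sharp (fun W => lA1 ρ br X (flat g X) W - (2 : ℝ)⁻¹ • dFun ρ (g X X) W) := by
  -- basic linearity facts for g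
  have hg_addr : ∀ X Y Z, g X (Y + Z) = g X Y + g X Z := by
    intro U Y Z; rw [hg_symm, hg_addl, hg_symm Y U, hg_symm Z U]
  have hg_smulr : ∀ (f : R) X Z, g X (f • Z) = f * g X Z := by
    intro f U Z; rw [hg_symm, hg_smull, hg_symm]
  have hg_negl : ∀ X Z, g (-X) Z = -g X Z := by
    intro U Z
    have h := hg_smull (-1 : R) U Z
    simpa using h
  have hg_subl : ∀ X Y Z, g (X - Y) Z = g X Z - g Y Z := by
    intro U Y Z
    rw [sub_eq_add_neg, hg_addl, hg_negl, sub_eq_add_neg]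
  have hg_zerol : ∀ Z, g 0 Z = 0 := by
    intro Z
    have h := hg_smull (0 : R) 0 Z
    simpa using h
  -- bracket additivity in second argument
  have hbr_addr : ∀ X Y Z, br X (Y + Z) = br X Y + br X Z := by
    intro U Y Z
    rw [hbr_skew, hbr_addl, hbr_skew Y U, hbr_skew Z U]
    abel
  -- br X X = 0
  have hbrXX : br X X = 0 := by
    have h : br X X = - br X X := hbr_skew X X
    have h2 : (2 : ℝ) • br X X = 0 := by
      rw [two_smul]; nth_rewrite 1 [h]; simp
    have h3 : ((2 : ℝ)⁻¹ * 2) • br X X = 0 := by rw [mul_smul, h2, smul_zero]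
    simpa using h3
  have hTorXX : Tor br D X X = 0 := by
    simp [Tor, hbrXX]
  -- key torsion identity
  have htor : ∀ Z, g (D X Z) X = g (D Z X) X + g (br X Z) X := by
    intro Z
    have h := hskew_tor X Z X
    rw [hTorXX, hg_zerol, neg_zero] at h
    unfold Tor at h
    rw [hg_subl, hg_subl] at h
    linear_combination h
  -- the 1-form
  set ω : A → R := fun W => lA1 ρ br X (flat g X) W - (2 : ℝ)⁻¹ • dFun ρ (g X X) W with hω
  have hhalf : ∀ r : R, (2 : ℝ)⁻¹ • (r + r) = r := by
    intro r
    rw [← two_smul ℝ r, smul_smul]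
    norm_num
  have hval : ∀ Z, ω Z = ρ X (g X Z) - g X (br X Z) - g (D Z X) X := by
    intro Z
    have e2 : ρ Z (g X X) = g (D Z X) X + g (D Z X) X := by
      rw [hmetric Z X X, hg_symm X (D Z X)]
    simp only [hω, lA1, flat, dFun]
    rw [e2, hhalf]
  -- ω is additive
  have hadd : ∀ U V, ω (U + V) = ω U + ω V := by
    intro U V
    rw [hval, hval, hval, hg_addr, hρ_map_add, hbr_addr, hg_addr, hD_addl, hg_addl]
    ring
  -- ω is R-homogeneous
  have hsmul : ∀ (f : R) U, ω (f • U) = f * ω U := by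
    intro f U
    rw [hval, hval, hg_smulr, hρ_deriv, hbr_leib, hg_addr, hg_smulr, hg_smulr,
      hD_smull, hg_smull]
    ring
  -- conclude via nondegeneracy
  apply hg_nondeg
  intro Z
  rw [hsharp ω hadd hsmul Z, hval]
  have e1 : ρ X (g X Z) = g (D X X) Z + g X (D X Z) := hmetric X X Z
  have e3 := htor Z
  rw [e1]
  have h4 : g X (D X Z) = g (D X Z) X := hg_symm X (D X Z)
  have h5 : g X (br X Z) = g (br X Z) X := hg_symm X (br X Z)
  rw [h4, h5, e3]
  ring
end

section
/- Let ∇ be an A-connection in A on a skew-symmetric algebroid with pseudo-Riemannian metric g, and define the symmetric product ⟨X:Y⟩ = ∇_XY + ∇_YX. Then for all X, Y, Z ∈ Γ(A): g(⟨X:Y⟩, Z) = g(♯(L^a_X Y♭ + L^a_Y X♭ − d^a(g(X,Y))), Z) − g(T^∇(X,Z), Y) − g(T^∇(Y,Z), X) + 2(∇g)(Z,X,Y) − (d^s g)(X,Y,Z). -/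
variable {R : Type} [CommRing R] [Algebra ℝ R]
variable {A : Type} [AddCommGroup A] [Module R A] [Module ℝ A] [IsScalarTower ℝ R A]

/-- Theorem 4.2: expression of `g(⟨X:Y⟩, Z)` for the symmetric product
`⟨X:Y⟩ = ∇_X Y + ∇_Y X` of an arbitrary `A`-connection. -/
theorem g_symmetric_product_formula
    (ρ : A → R → R) (br : A → A → A)
    (hρ_add : ∀ X Y f, ρ (X + Y) f = ρ X f + ρ Y f)
    (hρ_smulR : ∀ (c : R) X f, ρ (c • X) f = c * ρ X f)
    (hρ_map_add : ∀ X f g, ρ X (f + g) = ρ X f + ρ X g)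
    (hρ_map_smul : ∀ X (c : ℝ) f, ρ X (c • f) = c • ρ X f)
    (hρ_deriv : ∀ X f g, ρ X (f * g) = f * ρ X g + g * ρ X f)
    (hbr_skew : ∀ X Y, br X Y = - br Y X)
    (hbr_addl : ∀ X Y Z, br (X + Y) Z = br X Z + br Y Z)
    (hbr_smul : ∀ (c : ℝ) X Y, br (c • X) Y = c • br X Y)
    (hbr_leib : ∀ X (f : R) Y, br X (f • Y) = f • br X Y + ρ X f • Y)
    (g : A → A → R) (sharp : (A → R) → A)
    (hg_symm : ∀ X Y, g X Y = g Y X)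
    (hg_addl : ∀ X Y Z, g (X + Y) Z = g X Z + g Y Z)
    (hg_smull : ∀ (f : R) X Z, g (f • X) Z = f * g X Z)
    (hg_nondeg : ∀ X Y, (∀ Z, g X Z = g Y Z) → X = Y)
    (hsharp : ∀ ω : A → R, (∀ X Y, ω (X + Y) = ω X + ω Y) →
      (∀ (f : R) X, ω (f • X) = f * ω X) → ∀ Z, g (sharp ω) Z = ω Z)
    (D : A → A → A)
    (hD_addl : ∀ X Y Z, D (X + Y) Z = D X Z + D Y Z)
    (hD_smull : ∀ (f : R) X Y, D (f • X) Y = f • D X Y)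
    (hD_addr : ∀ X Y Z, D X (Y + Z) = D X Y + D X Z)
    (hD_leib : ∀ X (f : R) Y, D X (f • Y) = f • D X Y + ρ X f • Y)
    (X Y Z : A) :
    g (D X Y + D Y X) Z =
      g (sharp (fun W =>
          lA1 ρ br X (flat g Y) W + lA1 ρ br Y (flat g X) W - dFun ρ (g X Y) W)) Z
        - g (Tor br D X Z) Y - g (Tor br D Y Z) X
        + 2 * covG ρ g D Z X Y - dsG ρ g D X Y Z := by
  
  -- helper lemmas
  have gnegl : ∀ X Y : A, g (-X) Y = - g X Y := by
    intro a b
    have : (-a : A) = (-1 : R) • a := by rw [neg_one_smul]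
    rw [this, hg_smull]; ring
  have gsubl : ∀ X Y Z : A, g (X - Y) Z = g X Z - g Y Z := by
    intro a b c
    rw [sub_eq_add_neg, hg_addl, gnegl]; ring
  have gaddr : ∀ X Y Z : A, g X (Y + Z) = g X Y + g X Z := by
    intro a b c; rw [hg_symm, hg_addl, hg_symm b a, hg_symm c a]
  have gsmulr : ∀ (f : R) (X Z : A), g Z (f • X) = f * g Z X := by
    intro f a c; rw [hg_symm, hg_smull, hg_symm]
  have brar : ∀ X Y Z : A, br X (Y + Z) = br X Y + br X Z := by
    intro a b c
    rw [hbr_skew, hbr_addl, hbr_skew b a, hbr_skew c a]; abel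
  -- the 1-form is linear
  have hω_add : ∀ W W' : A,
      (fun W => lA1 ρ br X (flat g Y) W + lA1 ρ br Y (flat g X) W - dFun ρ (g X Y) W) (W + W')
      = (fun W => lA1 ρ br X (flat g Y) W + lA1 ρ br Y (flat g X) W - dFun ρ (g X Y) W) W
      + (fun W => lA1 ρ br X (flat g Y) W + lA1 ρ br Y (flat g X) W - dFun ρ (g X Y) W) W' := by
    intro W W'
    simp only [lA1, flat, dFun]
    rw [gaddr, gaddr, hρ_map_add, hρ_map_add, brar, brar, gaddr, gaddr, hρ_add]
    ring
  have hω_smul : ∀ (f : R) (W : A),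
      (fun W => lA1 ρ br X (flat g Y) W + lA1 ρ br Y (flat g X) W - dFun ρ (g X Y) W) (f • W)
      = f * (fun W => lA1 ρ br X (flat g Y) W + lA1 ρ br Y (flat g X) W - dFun ρ (g X Y) W) W := by
    intro f W
    simp only [lA1, flat, dFun]
    rw [gsmulr, gsmulr, hρ_deriv, hρ_deriv, hbr_leib, hbr_leib,
      gaddr, gaddr, gsmulr, gsmulr, gsmulr, gsmulr, hρ_smulR]
    ring
  rw [hsharp _ hω_add hω_smul]
  simp only [lA1, flat, dFun, Tor, covG, dsG, hg_addl, gsubl]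
  rw [hg_symm Y (br X Z), hg_symm X (br Y Z), hg_symm Y (D X Z), hg_symm X (D Y Z), hg_symm X (D Z Y)]
  ring
end

section
/- If ∇ is a metric A-connection with totally skew-symmetric torsion with respect to a pseudo-Riemannian metric g on a skew-symmetric algebroid, then its symmetric product satisfies ∇_XY + ∇_YX = ♯(L^a_X Y♭ + L^a_Y X♭ − d^a(g(X,Y))) for all X, Y ∈ Γ(A). In particular, the symmetric product is independent of the (totally skew-symmetric) torsion. -/
variable {R : Type} [CommRing R] [Algebra ℝ R]
variable {A : Type} [AddCommGroup A] [Module R A] [Module ℝ A] [IsScalarTower ℝ R A]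

/-- For any metric `A`-connection with totally skew-symmetric torsion,
`∇_X Y + ∇_Y X = ♯(L^a_X Y♭ + L^a_Y X♭ − d^a(g(X,Y)))`; in particular the
symmetric product does not depend on the (totally skew-symmetric) torsion. -/
theorem symmetric_product_of_metric_skew_torsion_connection
    (ρ : A → R → R) (br : A → A → A)
    (hρ_add : ∀ X Y f, ρ (X + Y) f = ρ X f + ρ Y f)
    (hρ_smulR : ∀ (c : R) X f, ρ (c • X) f = c * ρ X f)
    (hρ_map_add : ∀ X f g, ρ X (f + g) = ρ X f + ρ X g)
    (hρ_map_smul : ∀ X (c : ℝ) f, ρ X (c • f) = c • ρ X f)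
    (hρ_deriv : ∀ X f g, ρ X (f * g) = f * ρ X g + g * ρ X f)
    (hbr_skew : ∀ X Y, br X Y = - br Y X)
    (hbr_addl : ∀ X Y Z, br (X + Y) Z = br X Z + br Y Z)
    (hbr_smul : ∀ (c : ℝ) X Y, br (c • X) Y = c • br X Y)
    (hbr_leib : ∀ X (f : R) Y, br X (f • Y) = f • br X Y + ρ X f • Y)
    (g : A → A → R) (sharp : (A → R) → A)
    (hg_symm : ∀ X Y, g X Y = g Y X)
    (hg_addl : ∀ X Y Z, g (X + Y) Z = g X Z + g Y Z)
    (hg_smull : ∀ (f : R) X Z, g (f • X) Z = f * g X Z)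
    (hg_nondeg : ∀ X Y, (∀ Z, g X Z = g Y Z) → X = Y)
    (hsharp : ∀ ω : A → R, (∀ X Y, ω (X + Y) = ω X + ω Y) →
      (∀ (f : R) X, ω (f • X) = f * ω X) → ∀ Z, g (sharp ω) Z = ω Z)
    (D : A → A → A)
    (hD_addl : ∀ X Y Z, D (X + Y) Z = D X Z + D Y Z)
    (hD_smull : ∀ (f : R) X Y, D (f • X) Y = f • D X Y)
    (hD_addr : ∀ X Y Z, D X (Y + Z) = D X Y + D X Z)
    (hD_leib : ∀ X (f : R) Y, D X (f • Y) = f • D X Y + ρ X f • Y)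
    (hmetric : ∀ Z X Y, ρ Z (g X Y) = g (D Z X) Y + g X (D Z Y))
    (hskew_tor : ∀ X Y Z, g (Tor br D X Y) Z = - g (Tor br D X Z) Y)
    (X Y : A) :
    D X Y + D Y X =
      sharp (fun W =>
        lA1 ρ br X (flat g Y) W + lA1 ρ br Y (flat g X) W - dFun ρ (g X Y) W) := by
  -- linearity facts for `g` in the first argument
  have g0 : ∀ Z, g 0 Z = 0 := by
    intro Z
    have := hg_smull 0 0 Z
    simpa using this
  have gneg : ∀ U Z, g (-U) Z = - g U Z := by
    intro U Z
    have h := hg_addl U (-U) Z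
    simp only [add_neg_cancel, g0] at h
    linear_combination -h
  have gsub : ∀ U V Z, g (U - V) Z = g U Z - g V Z := by
    intro U V Z
    rw [sub_eq_add_neg, hg_addl, gneg, sub_eq_add_neg]
  -- the key pointwise identity
  have key : ∀ W, lA1 ρ br X (flat g Y) W + lA1 ρ br Y (flat g X) W
      - dFun ρ (g X Y) W = g (D X Y + D Y X) W := by
    intro W
    have h1 : g (D X W) Y - g (D W X) Y - g (br X W) Y
        = -(g (D X Y) W - g (D Y X) W - g (br X Y) W) := by
      simpa [Tor, gsub] using hskew_tor X W Y
    have h2 : g (D Y W) X - g (D W Y) X - g (br Y W) X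
        = -(g (D Y X) W - g (D X Y) W - g (br Y X) W) := by
      simpa [Tor, gsub] using hskew_tor Y W X
    have hbrg : g (br Y X) W = - g (br X Y) W := by
      rw [hbr_skew Y X, gneg]
    simp only [lA1, flat, dFun, hg_addl]
    linear_combination hmetric X Y W + hmetric Y X W - hmetric W X Y
      + h1 + h2 + hbrg
      - hg_symm Y (br X W) - hg_symm X (br Y W)
      + hg_symm Y (D X W) + hg_symm X (D Y W)
      - hg_symm X (D W Y)
  -- nondegeneracy
  apply hg_nondeg
  intro Z
  rw [hsharp]
  · exact (key Z).symm
  · intro U V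
    simp only [key, hg_symm (D X Y + D Y X)]
    exact hg_addl U V _
  · intro f U
    simp only [key, hg_symm (D X Y + D Y X)]
    exact hg_smull f U _
end

section
/- Let ∇ be an A-connection defined by ∇_XY = ½([X,Y] + ⟨X:Y⟩) + ½T(X,Y), where ⟨·:·⟩ is a symmetric bracket and T is a 2-form valued in A whose associated trilinear form g(T(·,·),·) is totally skew-symmetric. Then for every X ∈ Γ(A): (∇_X g) = ½(L^a_X g + L^s_X g), where L^a and L^s are the alternating and symmetric Lie derivatives. -/
variable {R : Type} [CommRing R] [Algebra ℝ R]
variable {A : Type} [AddCommGroup A] [Module R A] [Module ℝ A] [IsScalarTower ℝ R A]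

/-- The alternating Lie derivative of the metric:
`(L^a_X g)(Y,Z) = ρ(X)(g(Y,Z)) − g([X,Y],Z) − g(Y,[X,Z])`. -/
def lAg (ρ : A → R → R) (br : A → A → A) (g : A → A → R) (X Y Z : A) : R :=
  ρ X (g Y Z) - g (br X Y) Z - g Y (br X Z)

/-- The symmetric Lie derivative of the metric:
`(L^s_X g)(Y,Z) = ρ(X)(g(Y,Z)) − g(⟨X:Y⟩,Z) − g(Y,⟨X:Z⟩)`. -/
def lSg (ρ : A → R → R) (sb : A → A → A) (g : A → A → R) (X Y Z : A) : R :=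
  ρ X (g Y Z) - g (sb X Y) Z - g Y (sb X Z)

/-- For `∇_X Y = ½([X,Y] + ⟨X:Y⟩) + ½T(X,Y)` with `g(T(·,·),·)` totally skew-symmetric,
`(∇_X g) = ½ (L^a_X g + L^s_X g)`. -/
theorem covariant_derivative_of_metric_via_lie_derivatives
    (ρ : A → R → R) (br : A → A → A)
    (hρ_add : ∀ X Y f, ρ (X + Y) f = ρ X f + ρ Y f)
    (hρ_smulR : ∀ (c : R) X f, ρ (c • X) f = c * ρ X f)
    (hρ_map_add : ∀ X f g, ρ X (f + g) = ρ X f + ρ X g)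
    (hρ_map_smul : ∀ X (c : ℝ) f, ρ X (c • f) = c • ρ X f)
    (hρ_deriv : ∀ X f g, ρ X (f * g) = f * ρ X g + g * ρ X f)
    (hbr_skew : ∀ X Y, br X Y = - br Y X)
    (hbr_addl : ∀ X Y Z, br (X + Y) Z = br X Z + br Y Z)
    (hbr_smul : ∀ (c : ℝ) X Y, br (c • X) Y = c • br X Y)
    (hbr_leib : ∀ X (f : R) Y, br X (f • Y) = f • br X Y + ρ X f • Y)
    (sb : A → A → A)
    (hsb_symm : ∀ X Y, sb X Y = sb Y X)
    (hsb_addl : ∀ X Y Z, sb (X + Y) Z = sb X Z + sb Y Z)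
    (hsb_smul : ∀ (c : ℝ) X Y, sb (c • X) Y = c • sb X Y)
    (hsb_leib : ∀ X (f : R) Y, sb X (f • Y) = f • sb X Y + ρ X f • Y)
    (g : A → A → R)
    (hg_symm : ∀ X Y, g X Y = g Y X)
    (hg_addl : ∀ X Y Z, g (X + Y) Z = g X Z + g Y Z)
    (hg_smull : ∀ (f : R) X Z, g (f • X) Z = f * g X Z)
    (T : A → A → A)
    (hT_skew : ∀ X Y, T X Y = - T Y X)
    (hT_tot_skew : ∀ X Y Z, g (T X Y) Z = - g (T X Z) Y)
    (D : A → A → A)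
    (hD : ∀ X Y, D X Y = (2 : ℝ)⁻¹ • (br X Y + sb X Y) + (2 : ℝ)⁻¹ • T X Y)
    (X Y Z : A) :
    ρ X (g Y Z) - g (D X Y) Z - g Y (D X Z) =
      (2 : ℝ)⁻¹ • (lAg ρ br g X Y Z + lSg ρ sb g X Y Z) := by
  have g_smull_real : ∀ (c : ℝ) (U V : A), g (c • U) V = c • g U V := by
    intro c U V
    rw [← algebraMap_smul R c U, hg_smull, ← Algebra.smul_def]
  have g_addr : ∀ (U V W : A), g U (V + W) = g U V + g U W := by
    intro U V W
    rw [hg_symm, hg_addl, hg_symm V U, hg_symm W U]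
  have g_smulr_real : ∀ (c : ℝ) (U V : A), g U (c • V) = c • g U V := by
    intro c U V
    rw [hg_symm, g_smull_real, hg_symm V U]
  have hT : g Y (T X Z) = - g (T X Y) Z := by
    rw [hg_symm, hT_tot_skew X Z Y]
  rw [hD, hD, hg_addl, g_smull_real, g_smull_real, hg_addl, g_addr, g_smulr_real,
    g_addr, g_smulr_real, hT, lAg, lSg]
  simp only [Algebra.smul_def]
  have h2 : (algebraMap ℝ R) (2⁻¹ : ℝ) * 2 = 1 := by
    rw [← map_ofNat (algebraMap ℝ R) 2, ← map_mul]
    norm_num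
  linear_combination (-(ρ X (g Y Z))) * h2
end

section
/- An A-connection ∇_XY = ½([X,Y] + ⟨X:Y⟩) + ½T(X,Y) with totally skew-symmetric torsion T (with respect to g) is metric (∇g = 0) if and only if L^a_X g = −L^s_X g for all X ∈ Γ(A). -/
variable {R : Type} [CommRing R] [Algebra ℝ R]
variable {A : Type} [AddCommGroup A] [Module R A] [Module ℝ A] [IsScalarTower ℝ R A]

/-- `∇_X Y = ½([X,Y] + ⟨X:Y⟩) + ½T(X,Y)` with totally skew-symmetric torsion `T`
is metric iff `L^a_X g = − L^s_X g` for all `X`. -/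
theorem metric_compatibility_iff_lie_derivatives
    (ρ : A → R → R) (br : A → A → A)
    (hρ_add : ∀ X Y f, ρ (X + Y) f = ρ X f + ρ Y f)
    (hρ_smulR : ∀ (c : R) X f, ρ (c • X) f = c * ρ X f)
    (hρ_map_add : ∀ X f g, ρ X (f + g) = ρ X f + ρ X g)
    (hρ_map_smul : ∀ X (c : ℝ) f, ρ X (c • f) = c • ρ X f)
    (hρ_deriv : ∀ X f g, ρ X (f * g) = f * ρ X g + g * ρ X f)
    (hbr_skew : ∀ X Y, br X Y = - br Y X)
    (hbr_addl : ∀ X Y Z, br (X + Y) Z = br X Z + br Y Z)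
    (hbr_smul : ∀ (c : ℝ) X Y, br (c • X) Y = c • br X Y)
    (hbr_leib : ∀ X (f : R) Y, br X (f • Y) = f • br X Y + ρ X f • Y)
    (sb : A → A → A)
    (hsb_symm : ∀ X Y, sb X Y = sb Y X)
    (hsb_addl : ∀ X Y Z, sb (X + Y) Z = sb X Z + sb Y Z)
    (hsb_smul : ∀ (c : ℝ) X Y, sb (c • X) Y = c • sb X Y)
    (hsb_leib : ∀ X (f : R) Y, sb X (f • Y) = f • sb X Y + ρ X f • Y)
    (g : A → A → R)
    (hg_symm : ∀ X Y, g X Y = g Y X)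
    (hg_addl : ∀ X Y Z, g (X + Y) Z = g X Z + g Y Z)
    (hg_smull : ∀ (f : R) X Z, g (f • X) Z = f * g X Z)
    (T : A → A → A)
    (hT_skew : ∀ X Y, T X Y = - T Y X)
    (hT_tot_skew : ∀ X Y Z, g (T X Y) Z = - g (T X Z) Y)
    (D : A → A → A)
    (hD : ∀ X Y, D X Y = (2 : ℝ)⁻¹ • (br X Y + sb X Y) + (2 : ℝ)⁻¹ • T X Y) :
    (∀ X Y Z, ρ X (g Y Z) = g (D X Y) Z + g Y (D X Z)) ↔
      (∀ X Y Z, lAg ρ br g X Y Z = - lSg ρ sb g X Y Z) := by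

  have hgsmul : ∀ (c : ℝ) (W Z : A), g (c • W) Z = c • g W Z := by
    intro c W Z
    rw [← algebraMap_smul R c W, hg_smull, Algebra.smul_def]
  have key : ∀ X Y Z, g (D X Y) Z + g Y (D X Z)
      = (2:ℝ)⁻¹ • (g (br X Y) Z + g Y (br X Z) + (g (sb X Y) Z + g Y (sb X Z))) := by
    intro X Y Z
    have h1 : g Y (D X Z) = g (D X Z) Y := hg_symm _ _
    have h2 : g Y (br X Z) = g (br X Z) Y := hg_symm _ _
    have h3 : g Y (sb X Z) = g (sb X Z) Y := hg_symm _ _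
    have hT : g (T X Y) Z = - g (T X Z) Y := hT_tot_skew X Y Z
    rw [h1, h2, h3, hD, hD, hg_addl, hg_addl, hgsmul, hgsmul, hgsmul, hgsmul,
      hg_addl, hg_addl, hT]
    rw [smul_add, smul_add, smul_neg]
    simp only [smul_add]
    abel
  constructor
  · intro h X Y Z
    have hh := h X Y Z
    rw [key] at hh
    unfold lAg lSg
    have : ρ X (g Y Z) + ρ X (g Y Z)
        = g (br X Y) Z + g Y (br X Z) + (g (sb X Y) Z + g Y (sb X Z)) := by
      rw [hh, ← smul_add, ← two_smul ℝ, smul_smul]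
      norm_num
    linear_combination this
  · intro h X Y Z
    have hh := h X Y Z
    unfold lAg lSg at hh
    rw [key]
    have h2 : g (br X Y) Z + g Y (br X Z) + (g (sb X Y) Z + g Y (sb X Z))
        = ρ X (g Y Z) + ρ X (g Y Z) := by linear_combination -hh
    rw [h2, ← two_smul ℝ, smul_smul]
    norm_num
end

section
/- On a skew-symmetric algebroid (A, ρ, [·,·]) with pseudo-Riemannian metric g, the map ⟨X:Y⟩^s := ♯(L^a_X Y♭ + L^a_Y X♭ − d^a(g(X,Y))) is a symmetric bracket (symmetric, R-bilinear, satisfying ⟨X:fY⟩^s = f⟨X:Y⟩^s + ρ(X)(f)Y), and its induced symmetric Lie derivative satisfies L^s_X g = −L^a_X g for all X ∈ Γ(A). -/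
variable {R : Type} [CommRing R] [Algebra ℝ R]
variable {A : Type} [AddCommGroup A] [Module R A] [Module ℝ A] [IsScalarTower ℝ R A]

/-- The bracket `⟨X:Y⟩^s = ♯(L^a_X Y♭ + L^a_Y X♭ − d^a(g(X,Y)))`. -/
def sbS (ρ : A → R → R) (br : A → A → A) (g : A → A → R) (sharp : (A → R) → A)
    (X Y : A) : A :=
  sharp (fun W => lA1 ρ br X (flat g Y) W + lA1 ρ br Y (flat g X) W - dFun ρ (g X Y) W)

/-- `⟨X:Y⟩^s := ♯(L^a_X Y♭ + L^a_Y X♭ − d^a(g(X,Y)))` is a symmetric bracket and its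
symmetric Lie derivative satisfies `L^s_X g = − L^a_X g`. -/
theorem sbS_is_symmetric_bracket
    (ρ : A → R → R) (br : A → A → A)
    (hρ_add : ∀ X Y f, ρ (X + Y) f = ρ X f + ρ Y f)
    (hρ_smulR : ∀ (c : R) X f, ρ (c • X) f = c * ρ X f)
    (hρ_map_add : ∀ X f g, ρ X (f + g) = ρ X f + ρ X g)
    (hρ_map_smul : ∀ X (c : ℝ) f, ρ X (c • f) = c • ρ X f)
    (hρ_deriv : ∀ X f g, ρ X (f * g) = f * ρ X g + g * ρ X f)
    (hbr_skew : ∀ X Y, br X Y = - br Y X)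
    (hbr_addl : ∀ X Y Z, br (X + Y) Z = br X Z + br Y Z)
    (hbr_smul : ∀ (c : ℝ) X Y, br (c • X) Y = c • br X Y)
    (hbr_leib : ∀ X (f : R) Y, br X (f • Y) = f • br X Y + ρ X f • Y)
    (g : A → A → R) (sharp : (A → R) → A)
    (hg_symm : ∀ X Y, g X Y = g Y X)
    (hg_addl : ∀ X Y Z, g (X + Y) Z = g X Z + g Y Z)
    (hg_smull : ∀ (f : R) X Z, g (f • X) Z = f * g X Z)
    (hg_nondeg : ∀ X Y, (∀ Z, g X Z = g Y Z) → X = Y)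
    (hsharp : ∀ ω : A → R, (∀ X Y, ω (X + Y) = ω X + ω Y) →
      (∀ (f : R) X, ω (f • X) = f * ω X) → ∀ Z, g (sharp ω) Z = ω Z)
    :
    (∀ X Y, sbS ρ br g sharp X Y = sbS ρ br g sharp Y X) ∧
    (∀ X Y Z, sbS ρ br g sharp (X + Y) Z = sbS ρ br g sharp X Z + sbS ρ br g sharp Y Z) ∧
    (∀ (c : ℝ) X Y, sbS ρ br g sharp (c • X) Y = c • sbS ρ br g sharp X Y) ∧
    (∀ X (f : R) Y, sbS ρ br g sharp X (f • Y) = f • sbS ρ br g sharp X Y + ρ X f • Y) ∧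
    (∀ X Y Z, lSg ρ (sbS ρ br g sharp) g X Y Z = - lAg ρ br g X Y Z) := by

  -- helper lemmas about g, br, ρ
  have hg0 : ∀ X : A, g X 0 = 0 := by
    intro X
    rw [hg_symm, show (0:A) = (0:R) • X from (zero_smul R X).symm, hg_smull]
    ring
  have hgaddr : ∀ X Y Z : A, g X (Y + Z) = g X Y + g X Z := by
    intro X Y Z
    rw [hg_symm X (Y + Z), hg_addl, hg_symm Y X, hg_symm Z X]
  have hgsmulr : ∀ (X : A) (f : R) (Y : A), g X (f • Y) = f * g X Y := by
    intro X f Y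
    rw [hg_symm X (f • Y), hg_smull, hg_symm Y X]
  have hgnegr : ∀ X Y : A, g X (-Y) = - g X Y := by
    intro X Y
    have h := hgaddr X Y (-Y)
    rw [add_neg_cancel, hg0] at h
    linear_combination -h
  have hgsubr : ∀ X Y Z : A, g X (Y - Z) = g X Y - g X Z := by
    intro X Y Z
    rw [sub_eq_add_neg, hgaddr, hgnegr, sub_eq_add_neg]
  have hbr_addr : ∀ X Y Z : A, br X (Y + Z) = br X Y + br X Z := by
    intro X Y Z
    rw [hbr_skew X (Y + Z), hbr_addl, neg_add, ← hbr_skew, ← hbr_skew]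
  have hbr_leibl : ∀ (f : R) (X Y : A), br (f • X) Y = f • br X Y - ρ Y f • X := by
    intro f X Y
    rw [hbr_skew (f • X) Y, hbr_leib, neg_add, ← smul_neg, ← hbr_skew, sub_eq_add_neg]
  -- key computation: g (sbS X Y) Z is the 1-form value
  have key : ∀ X Y Z : A, g (sbS ρ br g sharp X Y) Z =
      lA1 ρ br X (flat g Y) Z + lA1 ρ br Y (flat g X) Z - dFun ρ (g X Y) Z := by
    intro X Y Z
    unfold sbS
    refine hsharp _ ?_ ?_ Z
    · intro W W'
      simp only [lA1, flat, dFun, hgaddr, hbr_addr, hρ_add, hρ_map_add]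
      ring
    · intro f W
      simp only [lA1, flat, dFun, hgsmulr, hbr_leib, hρ_smulR, hρ_deriv, hgaddr]
      ring
  refine ⟨?_, ?_, ?_, ?_, ?_⟩
  · -- symmetry
    intro X Y
    apply hg_nondeg
    intro Z
    rw [key, key]
    simp only [lA1, flat, dFun]
    rw [hg_symm X Y]
    ring
  · -- additivity
    intro X Y Z
    apply hg_nondeg
    intro W
    rw [key, hg_addl (sbS ρ br g sharp X Z) (sbS ρ br g sharp Y Z) W, key, key]
    simp only [lA1, flat, dFun, hg_addl, hbr_addl, hρ_add, hρ_map_add, hgaddr]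
    ring
  · -- real homogeneity
    intro c X Y
    apply hg_nondeg
    intro W
    have hgc : ∀ U V : A, g (c • U) V = c • g U V := by
      intro U V
      rw [← algebraMap_smul R c U, hg_smull, Algebra.smul_def]
    have hgcr : ∀ U V : A, g U (c • V) = c • g U V := by
      intro U V
      rw [hg_symm, hgc, hg_symm V U]
    have hρc : ∀ (U : A) (f : R), ρ (c • U) f = c • ρ U f := by
      intro U f
      rw [← algebraMap_smul R c U, hρ_smulR, Algebra.smul_def]
    rw [key, hgc (sbS ρ br g sharp X Y) W, key]
    simp only [lA1, flat, dFun, hgc, hρc, hρ_map_smul, hbr_smul, hgcr]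
    simp only [Algebra.smul_def]
    ring
  · -- Leibniz
    intro X f Y
    apply hg_nondeg
    intro W
    rw [key, hg_addl, hg_smull, hg_smull, key]
    simp only [lA1, flat, dFun, hg_smull, hgsmulr, hρ_smulR, hρ_deriv, hbr_leibl,
      hgsubr, hgaddr]
    ring
  · -- L^s g = - L^a g
    intro X Y Z
    simp only [lSg, lAg]
    rw [key X Y Z, hg_symm Y (sbS ρ br g sharp X Z), key X Z Y]
    simp only [lA1, flat, dFun]
    rw [hg_symm Z Y, hbr_skew Z Y, hgnegr, hg_symm (br X Y) Z]
    ring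
end

section
/- On a skew-symmetric algebroid with pseudo-Riemannian metric g, the connection defined by ∇_XY = ½([X,Y] + ⟨X:Y⟩^s), with ⟨X:Y⟩^s = ♯(L^a_X Y♭ + L^a_Y X♭ − d^a(g(X,Y))), is torsion-free and metric with respect to g; i.e., it is the Levi-Civita connection of g. -/
variable {R : Type} [CommRing R] [Algebra ℝ R]
variable {A : Type} [AddCommGroup A] [Module R A] [Module ℝ A] [IsScalarTower ℝ R A]

/-- The connection `∇_X Y = ½([X,Y] + ⟨X:Y⟩^s)` is torsion-free and metric, i.e. it is
the Levi-Civita connection of `g`. -/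
theorem levi_civita_explicit_formula
    (ρ : A → R → R) (br : A → A → A)
    (hρ_add : ∀ X Y f, ρ (X + Y) f = ρ X f + ρ Y f)
    (hρ_smulR : ∀ (c : R) X f, ρ (c • X) f = c * ρ X f)
    (hρ_map_add : ∀ X f g, ρ X (f + g) = ρ X f + ρ X g)
    (hρ_map_smul : ∀ X (c : ℝ) f, ρ X (c • f) = c • ρ X f)
    (hρ_deriv : ∀ X f g, ρ X (f * g) = f * ρ X g + g * ρ X f)
    (hbr_skew : ∀ X Y, br X Y = - br Y X)
    (hbr_addl : ∀ X Y Z, br (X + Y) Z = br X Z + br Y Z)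
    (hbr_smul : ∀ (c : ℝ) X Y, br (c • X) Y = c • br X Y)
    (hbr_leib : ∀ X (f : R) Y, br X (f • Y) = f • br X Y + ρ X f • Y)
    (g : A → A → R) (sharp : (A → R) → A)
    (hg_symm : ∀ X Y, g X Y = g Y X)
    (hg_addl : ∀ X Y Z, g (X + Y) Z = g X Z + g Y Z)
    (hg_smull : ∀ (f : R) X Z, g (f • X) Z = f * g X Z)
    (hg_nondeg : ∀ X Y, (∀ Z, g X Z = g Y Z) → X = Y)
    (hsharp : ∀ ω : A → R, (∀ X Y, ω (X + Y) = ω X + ω Y) →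
      (∀ (f : R) X, ω (f • X) = f * ω X) → ∀ Z, g (sharp ω) Z = ω Z)
    (D : A → A → A)
    (hD : ∀ X Y, D X Y = (2 : ℝ)⁻¹ • (br X Y + sbS ρ br g sharp X Y)) :
    (∀ X Y, D X Y - D Y X = br X Y) ∧
    (∀ Z X Y, ρ Z (g X Y) = g (D Z X) Y + g X (D Z Y)) := by

  have hg_addr : ∀ X Y Z : A, g X (Y + Z) = g X Y + g X Z := by
    intro X Y Z; rw [hg_symm, hg_addl, hg_symm Y X, hg_symm Z X]
  have hg_smulr : ∀ (f : R) (X Z : A), g X (f • Z) = f * g X Z := by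
    intro f X Z; rw [hg_symm, hg_smull, hg_symm]
  have hg_negr : ∀ X Z : A, g X (-Z) = - g X Z := by
    intro X Z; rw [← neg_one_smul R Z, hg_smulr]; ring
  have hbr_addr : ∀ X Y Z : A, br X (Y + Z) = br X Y + br X Z := by
    intro X Y Z
    rw [hbr_skew X (Y + Z), hbr_addl, hbr_skew Y X, hbr_skew Z X]; abel
  have hG : ∀ X Y Z : A, g (sbS ρ br g sharp X Y) Z =
      ρ X (g Y Z) - g Y (br X Z) + (ρ Y (g X Z) - g X (br Y Z)) - ρ Z (g X Y) := by
    intro X Y Z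
    unfold sbS
    rw [hsharp _ ?_ ?_ Z]
    · simp only [lA1, flat, dFun]
    · intro Z W
      simp only [lA1, flat, dFun, hg_addr, hbr_addr, hρ_add, hρ_map_add]; ring
    · intro f W
      simp only [lA1, flat, dFun, hbr_leib, hg_addr, hg_smulr, hρ_deriv, hρ_smulR]; ring
  have hs : ∀ X Y, sbS ρ br g sharp X Y = sbS ρ br g sharp Y X := by
    intro X Y; apply hg_nondeg; intro Z
    rw [hG, hG, hg_symm X Y]; ring
  have hsmulℝ : ∀ (c : ℝ) (X Y : A), g (c • X) Y = c • g X Y := by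
    intro c X Y
    rw [← algebraMap_smul R c X, hg_smull, Algebra.smul_def]
  have hhalf : ∀ r : R, (2 : ℝ)⁻¹ • (r + r) = r := by
    intro r; rw [← two_smul ℝ r, smul_smul]; norm_num
  constructor
  · intro X Y
    rw [hD X Y, hD Y X, hs Y X, hbr_skew Y X, ← smul_sub]
    have h2 : br X Y + sbS ρ br g sharp X Y - (-br X Y + sbS ρ br g sharp X Y)
        = (2 : ℝ) • br X Y := by rw [two_smul]; abel
    rw [h2, smul_smul]; norm_num
  · intro Z X Y
    have hsmulr2 : ∀ (c : ℝ) (X Y : A), g X (c • Y) = c • g X Y := by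
      intro c X Y; rw [hg_symm, hsmulℝ, hg_symm]
    rw [hD Z X, hD Z Y, hsmulℝ, hsmulr2, hg_addl, hg_addr,
      hg_symm X (sbS ρ br g sharp Z Y), hG, hG, ← smul_add]
    conv_lhs => rw [← hhalf (ρ Z (g X Y))]
    congr 1
    rw [hg_symm Y X, hg_symm (br Z X) Y, hbr_skew Y X, hg_negr]
    ring
end

section
/- On a skew-symmetric algebroid with pseudo-Riemannian metric g and a symmetric bracket ⟨·:·⟩ with associated symmetric Lie derivative L^s and symmetric differential d^s, the map {X,Y}^s := ♯(L^s_X Y♭ + L^s_Y X♭ + d^s(g(X,Y))) is again a symmetric bracket: it is symmetric, R-bilinear, and satisfies {X, fY}^s = f{X,Y}^s + ρ(X)(f)Y. -/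
variable {R : Type} [CommRing R] [Algebra ℝ R]
variable {A : Type} [AddCommGroup A] [Module R A] [Module ℝ A] [IsScalarTower ℝ R A]

/-- The symmetric Lie derivative on `1`-forms: `(L^s_X ω)(Z) = ρ(X)(ω(Z)) − ω(⟨X:Z⟩)`. -/
def lS1 (ρ : A → R → R) (sb : A → A → A) (X : A) (ω : A → R) : A → R :=
  fun Z => ρ X (ω Z) - ω (sb X Z)

/-- The bracket `{X,Y}^s = ♯(L^s_X Y♭ + L^s_Y X♭ + d^s(g(X,Y)))`. -/
def curlyS (ρ : A → R → R) (sb : A → A → A) (g : A → A → R) (sharp : (A → R) → A)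
    (X Y : A) : A :=
  sharp (fun W => lS1 ρ sb X (flat g Y) W + lS1 ρ sb Y (flat g X) W + dFun ρ (g X Y) W)

/-- `{X,Y}^s := ♯(L^s_X Y♭ + L^s_Y X♭ + d^s(g(X,Y)))` is again a symmetric bracket. -/
theorem curlyS_is_symmetric_bracket
    (ρ : A → R → R) (br : A → A → A)
    (hρ_add : ∀ X Y f, ρ (X + Y) f = ρ X f + ρ Y f)
    (hρ_smulR : ∀ (c : R) X f, ρ (c • X) f = c * ρ X f)
    (hρ_map_add : ∀ X f g, ρ X (f + g) = ρ X f + ρ X g)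
    (hρ_map_smul : ∀ X (c : ℝ) f, ρ X (c • f) = c • ρ X f)
    (hρ_deriv : ∀ X f g, ρ X (f * g) = f * ρ X g + g * ρ X f)
    (hbr_skew : ∀ X Y, br X Y = - br Y X)
    (hbr_addl : ∀ X Y Z, br (X + Y) Z = br X Z + br Y Z)
    (hbr_smul : ∀ (c : ℝ) X Y, br (c • X) Y = c • br X Y)
    (hbr_leib : ∀ X (f : R) Y, br X (f • Y) = f • br X Y + ρ X f • Y)
    (sb : A → A → A)
    (hsb_symm : ∀ X Y, sb X Y = sb Y X)
    (hsb_addl : ∀ X Y Z, sb (X + Y) Z = sb X Z + sb Y Z)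
    (hsb_smul : ∀ (c : ℝ) X Y, sb (c • X) Y = c • sb X Y)
    (hsb_leib : ∀ X (f : R) Y, sb X (f • Y) = f • sb X Y + ρ X f • Y)
    (g : A → A → R) (sharp : (A → R) → A)
    (hg_symm : ∀ X Y, g X Y = g Y X)
    (hg_addl : ∀ X Y Z, g (X + Y) Z = g X Z + g Y Z)
    (hg_smull : ∀ (f : R) X Z, g (f • X) Z = f * g X Z)
    (hg_nondeg : ∀ X Y, (∀ Z, g X Z = g Y Z) → X = Y)
    (hsharp : ∀ ω : A → R, (∀ X Y, ω (X + Y) = ω X + ω Y) →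
      (∀ (f : R) X, ω (f • X) = f * ω X) → ∀ Z, g (sharp ω) Z = ω Z)
    :
    (∀ X Y, curlyS ρ sb g sharp X Y = curlyS ρ sb g sharp Y X) ∧
    (∀ X Y Z, curlyS ρ sb g sharp (X + Y) Z
        = curlyS ρ sb g sharp X Z + curlyS ρ sb g sharp Y Z) ∧
    (∀ (c : ℝ) X Y, curlyS ρ sb g sharp (c • X) Y = c • curlyS ρ sb g sharp X Y) ∧
    (∀ X (f : R) Y, curlyS ρ sb g sharp X (f • Y)
        = f • curlyS ρ sb g sharp X Y + ρ X f • Y) := by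
  -- auxiliary lemmas from symmetry
  have gaddr : ∀ X Y Z : A, g X (Y + Z) = g X Y + g X Z := by
    intro X Y Z; rw [hg_symm, hg_addl, hg_symm Y X, hg_symm Z X]
  have gsmulr : ∀ (f : R) (X Y : A), g X (f • Y) = f * g X Y := by
    intro f X Y; rw [hg_symm, hg_smull, hg_symm]
  have sbaddr : ∀ X Y Z : A, sb X (Y + Z) = sb X Y + sb X Z := by
    intro X Y Z; rw [hsb_symm, hsb_addl, hsb_symm Y X, hsb_symm Z X]
  -- real scalars act via the algebra map
  have hsmulA : ∀ (c : ℝ) (X : A), c • X = (algebraMap ℝ R c) • X := by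
    intro c X; rw [← smul_one_smul R c X, Algebra.smul_def, mul_one]
  have hsmulR : ∀ (c : ℝ) (r : R), c • r = (algebraMap ℝ R c) * r := by
    intro c r; rw [Algebra.smul_def]
  have gsl : ∀ (c : ℝ) (X Z : A), g (c • X) Z = c • g X Z := by
    intro c X Z; rw [hsmulA, hg_smull, hsmulR]
  have gsr : ∀ (c : ℝ) (X Z : A), g X (c • Z) = c • g X Z := by
    intro c X Z; rw [hsmulA, gsmulr, hsmulR]
  have ρs : ∀ (c : ℝ) (X : A) (f : R), ρ (c • X) f = c • ρ X f := by
    intro c X f; rw [hsmulA, hρ_smulR, hsmulR]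
  -- the key formula for g(curlyS X Y, Z)
  have key : ∀ X Y Z : A, g (curlyS ρ sb g sharp X Y) Z
      = ρ X (g Y Z) - g Y (sb X Z) + (ρ Y (g X Z) - g X (sb Y Z)) + ρ Z (g X Y) := by
    intro X Y Z
    have hadd : ∀ W₁ W₂ : A,
        (lS1 ρ sb X (flat g Y) (W₁ + W₂) + lS1 ρ sb Y (flat g X) (W₁ + W₂)
          + dFun ρ (g X Y) (W₁ + W₂))
        = (lS1 ρ sb X (flat g Y) W₁ + lS1 ρ sb Y (flat g X) W₁ + dFun ρ (g X Y) W₁)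
          + (lS1 ρ sb X (flat g Y) W₂ + lS1 ρ sb Y (flat g X) W₂ + dFun ρ (g X Y) W₂) := by
      intro W₁ W₂
      simp only [lS1, flat, dFun, gaddr, sbaddr, hρ_map_add, hρ_add]
      ring
    have hsm : ∀ (f : R) (W : A),
        (lS1 ρ sb X (flat g Y) (f • W) + lS1 ρ sb Y (flat g X) (f • W)
          + dFun ρ (g X Y) (f • W))
        = f * (lS1 ρ sb X (flat g Y) W + lS1 ρ sb Y (flat g X) W + dFun ρ (g X Y) W) := by
      intro f W
      have hx : sb X (f • W) = f • sb X W + ρ X f • W := hsb_leib X f W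
      have hy : sb Y (f • W) = f • sb Y W + ρ Y f • W := hsb_leib Y f W
      simp only [lS1, flat, dFun, gsmulr, hx, hy, gaddr, hρ_deriv, hρ_smulR]
      ring
    have := hsharp (fun W => lS1 ρ sb X (flat g Y) W + lS1 ρ sb Y (flat g X) W
        + dFun ρ (g X Y) W) hadd hsm Z
    simpa only [curlyS, lS1, flat, dFun] using this
  refine ⟨?_, ?_, ?_, ?_⟩
  · -- symmetry
    intro X Y
    apply hg_nondeg
    intro Z
    rw [key, key, hg_symm X Y]
    ring
  · -- additivity
    intro X Y Z
    apply hg_nondeg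
    intro W
    rw [key]
    simp only [hg_addl, hρ_add, hsb_addl, gaddr, hρ_map_add]
    rw [key, key]
    ring
  · -- ℝ-homogeneity
    intro c X Y
    apply hg_nondeg
    intro Z
    simp only [key, hsb_smul, gsl, gsr, ρs, hρ_map_smul]
    simp only [hsmulR]
    ring
  · -- Leibniz
    intro X f Y
    apply hg_nondeg
    intro Z
    have hsbf : sb (f • Y) Z = f • sb Y Z + ρ Z f • Y := by
      rw [hsb_symm, hsb_leib, hsb_symm Z Y]
    have hL : g (curlyS ρ sb g sharp X (f • Y)) Z
        = f * (ρ X (g Y Z) - g Y (sb X Z) + (ρ Y (g X Z) - g X (sb Y Z)) + ρ Z (g X Y))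
          + ρ X f * g Y Z := by
      rw [key]
      simp only [hg_smull, gsmulr, hρ_smulR, hsbf, gaddr, hρ_deriv]
      ring
    have hRh : g (f • curlyS ρ sb g sharp X Y + ρ X f • Y) Z
        = f * (ρ X (g Y Z) - g Y (sb X Z) + (ρ Y (g X Z) - g X (sb Y Z)) + ρ Z (g X Y))
          + ρ X f * g Y Z := by
      rw [hg_addl, hg_smull, hg_smull, key]
    rw [hL, hRh]
end

section
/- Let ⟨·:·⟩ be the symmetric product of the Levi-Civita connection of g on a skew-symmetric algebroid, ⟨X:Y⟩^s = ♯(L^a_X Y♭ + L^a_Y X♭ − d^a(g(X,Y))), and {X,Y}^s = ♯(L^s_X Y♭ + L^s_Y X♭ + d^s(g(X,Y))) with L^s, d^s induced by ⟨·:·⟩. Then {X,Y}^s = 2⟨X:Y⟩ − ⟨X:Y⟩^s for all X, Y ∈ Γ(A). -/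
variable {R : Type} [CommRing R] [Algebra ℝ R]
variable {A : Type} [AddCommGroup A] [Module R A] [Module ℝ A] [IsScalarTower ℝ R A]

/-- Comparison of the two symmetric brackets: `{X,Y}^s = 2⟨X:Y⟩ − ⟨X:Y⟩^s`, where
`⟨·:·⟩` is the symmetric product of the Levi-Civita connection. -/
theorem curlyS_eq_two_symmetric_product_sub_sbS
    (ρ : A → R → R) (br : A → A → A)
    (hρ_add : ∀ X Y f, ρ (X + Y) f = ρ X f + ρ Y f)
    (hρ_smulR : ∀ (c : R) X f, ρ (c • X) f = c * ρ X f)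
    (hρ_map_add : ∀ X f g, ρ X (f + g) = ρ X f + ρ X g)
    (hρ_map_smul : ∀ X (c : ℝ) f, ρ X (c • f) = c • ρ X f)
    (hρ_deriv : ∀ X f g, ρ X (f * g) = f * ρ X g + g * ρ X f)
    (hbr_skew : ∀ X Y, br X Y = - br Y X)
    (hbr_addl : ∀ X Y Z, br (X + Y) Z = br X Z + br Y Z)
    (hbr_smul : ∀ (c : ℝ) X Y, br (c • X) Y = c • br X Y)
    (hbr_leib : ∀ X (f : R) Y, br X (f • Y) = f • br X Y + ρ X f • Y)
    (g : A → A → R) (sharp : (A → R) → A)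
    (hg_symm : ∀ X Y, g X Y = g Y X)
    (hg_addl : ∀ X Y Z, g (X + Y) Z = g X Z + g Y Z)
    (hg_smull : ∀ (f : R) X Z, g (f • X) Z = f * g X Z)
    (hg_nondeg : ∀ X Y, (∀ Z, g X Z = g Y Z) → X = Y)
    (hsharp : ∀ ω : A → R, (∀ X Y, ω (X + Y) = ω X + ω Y) →
      (∀ (f : R) X, ω (f • X) = f * ω X) → ∀ Z, g (sharp ω) Z = ω Z)
    (D : A → A → A)
    (hD_addl : ∀ X Y Z, D (X + Y) Z = D X Z + D Y Z)
    (hD_smull : ∀ (f : R) X Y, D (f • X) Y = f • D X Y)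
    (hD_addr : ∀ X Y Z, D X (Y + Z) = D X Y + D X Z)
    (hD_leib : ∀ X (f : R) Y, D X (f • Y) = f • D X Y + ρ X f • Y)
    (hD_torsion_free : ∀ X Y, D X Y - D Y X = br X Y)
    (hD_metric : ∀ Z X Y, ρ Z (g X Y) = g (D Z X) Y + g X (D Z Y))
    (sb : A → A → A)
    (hsb : ∀ X Y, sb X Y = D X Y + D Y X)
    (X Y : A) :
    curlyS ρ sb g sharp X Y = (2 : ℝ) • sb X Y - sbS ρ br g sharp X Y := by
  have hg_addr : ∀ U V W : A, g U (V + W) = g U V + g U W := by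
    intro U V W
    rw [hg_symm, hg_addl, hg_symm V U, hg_symm W U]
  have hg_smulr : ∀ (f : R) (U V : A), g U (f • V) = f * g U V := by
    intro f U V
    rw [hg_symm, hg_smull, hg_symm]
  have hg_negl : ∀ U W : A, g (-U) W = - g U W := by
    intro U W
    have : (-U : A) = (-1 : R) • U := by rw [neg_one_smul]
    rw [this, hg_smull]; ring
  have hg_subl : ∀ U V W : A, g (U - V) W = g U W - g V W := by
    intro U V W
    rw [sub_eq_add_neg, hg_addl, hg_negl, sub_eq_add_neg]
  have hg_subr : ∀ U V W : A, g U (V - W) = g U V - g U W := by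
    intro U V W
    rw [hg_symm, hg_subl, hg_symm V U, hg_symm W U]
  -- the flat of sb X Y is additive and R-homogeneous
  have hflat_add : ∀ (U : A), ∀ V W : A, flat g U (V + W) = flat g U V + flat g U W := by
    intro U V W; exact hg_addr U V W
  have hflat_smul : ∀ (U : A), ∀ (f : R) (V : A), flat g U (f • V) = f * flat g U V := by
    intro U f V; exact hg_smulr f U V
  -- the curlyS 1-form equals flat g (sb X Y)
  have e1 : (fun W => lS1 ρ sb X (flat g Y) W + lS1 ρ sb Y (flat g X) W
      + dFun ρ (g X Y) W) = flat g (sb X Y) := by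
    funext W
    simp only [lS1, flat, dFun, hsb, hg_addr, hg_addl,
      hD_metric X Y W, hD_metric Y X W, hg_symm X Y, hD_metric W Y X,
      hg_symm (D W Y) X]
    ring
  -- the sbS 1-form also equals flat g (sb X Y)
  have e2 : (fun W => lA1 ρ br X (flat g Y) W + lA1 ρ br Y (flat g X) W
      - dFun ρ (g X Y) W) = flat g (sb X Y) := by
    funext W
    simp only [lA1, flat, dFun, hsb, ← hD_torsion_free, hg_subr, hg_addl,
      hD_metric X Y W, hD_metric Y X W, hg_symm X Y, hD_metric W Y X,
      hg_symm (D W Y) X]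
    ring
  apply hg_nondeg
  intro Z
  have hL : g (curlyS ρ sb g sharp X Y) Z = g (sb X Y) Z := by
    rw [curlyS, e1]
    exact hsharp _ (hflat_add _) (hflat_smul _) Z
  have hS : g (sbS ρ br g sharp X Y) Z = g (sb X Y) Z := by
    rw [sbS, e2]
    exact hsharp _ (hflat_add _) (hflat_smul _) Z
  have h2 : g ((2 : ℝ) • sb X Y) Z = g (sb X Y) Z + g (sb X Y) Z := by
    rw [← algebraMap_smul R (2 : ℝ) (sb X Y), hg_smull, map_ofNat, two_mul]
  rw [hL, hg_subl, h2, hS]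
  ring
end

section
/- On an almost Hermitian manifold, let ⟨·:·⟩ be the symmetric product of the Levi-Civita connection of (TM, Id, [·,·]) and ⟨·:·⟩^J that of the Levi-Civita connection (with respect to the same g) of the skew-symmetric algebroid (TM, J, [[·,·]]^J). Then ⟨X:Y⟩^J = ⟨JX:Y⟩ + ⟨X:JY⟩ + ♯(⟨X:Y⟩♭ ∘ J) for all vector fields X, Y. -/
variable {R : Type} [CommRing R] [Algebra ℝ R]
variable {A : Type} [AddCommGroup A] [Module R A] [Module ℝ A] [IsScalarTower ℝ R A]

/-- The Kosmann-Schwarzbach–Magri bracket `[[X,Y]]^J = [JX,Y] + [X,JY] − J[X,Y]`. -/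
def brJ (br : A → A → A) (J : A → A) (X Y : A) : A :=
  br (J X) Y + br X (J Y) - J (br X Y)

/-- The Nijenhuis tensor `N_J(X,Y) = J[JX,Y] + J[X,JY] + [X,Y] − [JX,JY]`. -/
def nijenhuis (br : A → A → A) (J : A → A) (X Y : A) : A :=
  J (br (J X) Y) + J (br X (J Y)) + br X Y - br (J X) (J Y)

/-- The Jacobiator of a bracket. -/
def jacOf (b : A → A → A) (X Y Z : A) : A :=
  b (b X Y) Z + b (b Z X) Y + b (b Y Z) X

/-- Comparison of the symmetric products of the Levi-Civita connections of the
algebroids `(TM, Id, [·,·])` and `(TM, J, [[·,·]]^J)`: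
`⟨X:Y⟩^J = ⟨JX:Y⟩ + ⟨X:JY⟩ + ♯(⟨X:Y⟩♭ ∘ J)`. -/
theorem symmetric_products_of_two_levi_civita
    (ρ : A → R → R) (br : A → A → A)
    (hρ_add : ∀ X Y f, ρ (X + Y) f = ρ X f + ρ Y f)
    (hρ_smulR : ∀ (c : R) X f, ρ (c • X) f = c * ρ X f)
    (hρ_map_add : ∀ X f g, ρ X (f + g) = ρ X f + ρ X g)
    (hρ_map_smul : ∀ X (c : ℝ) f, ρ X (c • f) = c • ρ X f)
    (hρ_deriv : ∀ X f g, ρ X (f * g) = f * ρ X g + g * ρ X f)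
    (hbr_skew : ∀ X Y, br X Y = - br Y X)
    (hbr_addl : ∀ X Y Z, br (X + Y) Z = br X Z + br Y Z)
    (hbr_smul : ∀ (c : ℝ) X Y, br (c • X) Y = c • br X Y)
    (hbr_leib : ∀ X (f : R) Y, br X (f • Y) = f • br X Y + ρ X f • Y)
    (hbr_jacobi : ∀ X Y Z, br (br X Y) Z + br (br Z X) Y + br (br Y Z) X = 0)
    (hρ_br : ∀ X Y f, ρ (br X Y) f = ρ X (ρ Y f) - ρ Y (ρ X f))
    (J : A → A)
    (hJ_add : ∀ X Y, J (X + Y) = J X + J Y)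
    (hJ_smul : ∀ (f : R) X, J (f • X) = f • J X)
    (hJ_sq : ∀ X, J (J X) = - X)
    (g : A → A → R) (sharp : (A → R) → A)
    (hg_symm : ∀ X Y, g X Y = g Y X)
    (hg_addl : ∀ X Y Z, g (X + Y) Z = g X Z + g Y Z)
    (hg_smull : ∀ (f : R) X Z, g (f • X) Z = f * g X Z)
    (hg_nondeg : ∀ X Y, (∀ Z, g X Z = g Y Z) → X = Y)
    (hsharp : ∀ ω : A → R, (∀ X Y, ω (X + Y) = ω X + ω Y) →
      (∀ (f : R) X, ω (f • X) = f * ω X) → ∀ Z, g (sharp ω) Z = ω Z)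
    (hJ_orth : ∀ X Y, g (J X) (J Y) = g X Y)
    (D : A → A → A)
    (hD_addl : ∀ X Y Z, D (X + Y) Z = D X Z + D Y Z)
    (hD_smull : ∀ (f : R) X Y, D (f • X) Y = f • D X Y)
    (hD_addr : ∀ X Y Z, D X (Y + Z) = D X Y + D X Z)
    (hD_leib : ∀ X (f : R) Y, D X (f • Y) = f • D X Y + ρ X f • Y)
    (hD_torsion_free : ∀ X Y, D X Y - D Y X = br X Y)
    (hD_metric : ∀ Z X Y, ρ Z (g X Y) = g (D Z X) Y + g X (D Z Y))
    (DJ : A → A → A)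
    (hDJ_addl : ∀ X Y Z, DJ (X + Y) Z = DJ X Z + DJ Y Z)
    (hDJ_smull : ∀ (f : R) X Y, DJ (f • X) Y = f • DJ X Y)
    (hDJ_addr : ∀ X Y Z, DJ X (Y + Z) = DJ X Y + DJ X Z)
    (hDJ_leib : ∀ X (f : R) Y, DJ X (f • Y) = f • DJ X Y + ρ (J X) f • Y)
    (hDJ_torsion_free : ∀ X Y, DJ X Y - DJ Y X = brJ br J X Y)
    (hDJ_metric : ∀ Z X Y, ρ (J Z) (g X Y) = g (DJ Z X) Y + g X (DJ Z Y))
    (X Y : A) :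
    DJ X Y + DJ Y X =
      (D (J X) Y + D Y (J X)) + (D X (J Y) + D (J Y) X)
        + sharp (fun Z => g (D X Y + D Y X) (J Z)) := by
    -- linearity facts for g
  have g_sub : ∀ U V W, g (U - V) W = g U W - g V W := by
    intro U V W
    have h := hg_addl (U - V) V W
    rw [sub_add_cancel] at h
    exact eq_sub_of_add_eq h.symm
  have g_addr : ∀ U V W, g U (V + W) = g U V + g U W := by
    intro U V W
    rw [hg_symm, hg_addl, hg_symm V U, hg_symm W U]
  have g_smulr : ∀ (f : R) U V, g U (f • V) = f * g U V := by
    intro f U V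
    rw [hg_symm, hg_smull, hg_symm]
  have g_negr : ∀ U V, g U (-V) = - g U V := by
    intro U V
    rw [← neg_one_smul R V, g_smulr, neg_one_mul]
  -- anti-invariance: g (J U) V = - g U (J V)
  have antiJ : ∀ U V, g (J U) V = - g U (J V) := by
    intro U V
    have h := hJ_orth U (J V)
    rw [hJ_sq, g_negr] at h
    linear_combination -h
  -- ρ maps negation to negation
  have ρ_neg : ∀ W (f : R), ρ W (-f) = - ρ W f := by
    intro W f
    rw [← neg_one_smul ℝ f, hρ_map_smul, neg_one_smul]
  -- Koszul-type formula for the symmetric product of a torsion-free metric connection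
  have koszul : ∀ (ρ' : A → R → R) (b : A → A → A) (D' : A → A → A),
      (∀ U V, D' U V - D' V U = b U V) →
      (∀ W U V, ρ' W (g U V) = g (D' W U) V + g U (D' W V)) →
      ∀ U V W, g (D' U V + D' V U) W =
        ρ' U (g V W) + ρ' V (g U W) - ρ' W (g U V) - g (b U W) V - g (b V W) U := by
    intro ρ' b D' htf hm U V W
    have h1 := hm U V W
    have h2 := hm V U W
    have h3 := hm W U V
    have t1 := htf U W
    have t2 := htf V W
    rw [hg_addl, ← t1, ← t2, g_sub, g_sub]
    linear_combination -h1 - h2 + h3 - hg_symm V (D' U W) - hg_symm U (D' V W)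
      + hg_symm U (D' W V)
  apply hg_nondeg
  intro Z
  have hL := koszul (fun W => ρ (J W)) (brJ br J) DJ hDJ_torsion_free hDJ_metric X Y Z
  have hA := koszul ρ br D hD_torsion_free hD_metric (J X) Y Z
  have hB := koszul ρ br D hD_torsion_free hD_metric X (J Y) Z
  have hS := koszul ρ br D hD_torsion_free hD_metric X Y (J Z)
  have hC : g (sharp (fun Z => g (D X Y + D Y X) (J Z))) Z = g (D X Y + D Y X) (J Z) := by
    refine hsharp _ ?_ ?_ Z
    · intro U V; rw [hJ_add, g_addr]
    · intro f U; rw [hJ_smul, g_smulr]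
  have hbrJX : g (brJ br J X Z) Y = g (br (J X) Z) Y + g (br X (J Z)) Y - g (J (br X Z)) Y := by
    rw [brJ, g_sub, hg_addl]
  have hbrJY : g (brJ br J Y Z) X = g (br (J Y) Z) X + g (br Y (J Z)) X - g (J (br Y Z)) X := by
    rw [brJ, g_sub, hg_addl]
  have a1 : g (J (br X Z)) Y = - g (br X Z) (J Y) := antiJ _ _
  have a2 : g (J (br Y Z)) X = - g (br Y Z) (J X) := antiJ _ _
  have rX : ρ X (g (J Y) Z) = - ρ X (g Y (J Z)) := by
    rw [antiJ Y Z, ρ_neg]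
  have rY : ρ Y (g (J X) Z) = - ρ Y (g X (J Z)) := by
    rw [antiJ X Z, ρ_neg]
  have rZ : ρ Z (g (J X) Y) = - ρ Z (g X (J Y)) := by
    rw [antiJ X Y, ρ_neg]
  have e1 := hg_addl (D (J X) Y + D Y (J X) + (D X (J Y) + D (J Y) X))
    (sharp (fun Z => g (D X Y + D Y X) (J Z))) Z
  have e2 := hg_addl (D (J X) Y + D Y (J X)) (D X (J Y) + D (J Y) X) Z
  linear_combination hL - e1 - e2 - hA - hB - hC - hS - hbrJX - hbrJY + a1 + a2 - rX - rY + rZ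
end

section
/- Let (TM, ρ, [·,·]^ρ) be a skew-symmetric algebroid structure on the tangent bundle of an almost complex manifold (M, J) with a symmetric bracket ⟨·:·⟩^ρ. Define P(X,Y) = −J([X,JY]^ρ + [Y,JX]^ρ) and Q(X,Y) = −J(⟨X:JY⟩^ρ + ⟨Y:JX⟩^ρ). Then P(X,fY) = fP(X,Y) + ρ(X)(f)Y + ρ(JX)(f)JY and Q(X,fY) = fQ(X,Y) + ρ(X)(f)Y − ρ(JX)(f)JY; consequently ½(P + Q) is a symmetric bracket in (TM, ρ, [·,·]^ρ). -/
variable {R : Type} [CommRing R] [Algebra ℝ R]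
variable {A : Type} [AddCommGroup A] [Module R A] [Module ℝ A] [IsScalarTower ℝ R A]

/-- `P(X,Y) = −J([X,JY]^ρ + [Y,JX]^ρ)`. -/
def opP (br : A → A → A) (J : A → A) (X Y : A) : A :=
  - J (br X (J Y) + br Y (J X))

/-- `Q(X,Y) = −J(⟨X:JY⟩^ρ + ⟨Y:JX⟩^ρ)`. -/
def opQ (sb : A → A → A) (J : A → A) (X Y : A) : A :=
  - J (sb X (J Y) + sb Y (J X))

/-- Leibniz-type rules for `P` and `Q`, and the fact that `½(P+Q)` is a symmetric
bracket in `(TM, ρ, [·,·]^ρ)`. -/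
theorem half_P_add_Q_is_symmetric_bracket
    (ρ : A → R → R) (br : A → A → A)
    (hρ_add : ∀ X Y f, ρ (X + Y) f = ρ X f + ρ Y f)
    (hρ_smulR : ∀ (c : R) X f, ρ (c • X) f = c * ρ X f)
    (hρ_map_add : ∀ X f g, ρ X (f + g) = ρ X f + ρ X g)
    (hρ_map_smul : ∀ X (c : ℝ) f, ρ X (c • f) = c • ρ X f)
    (hρ_deriv : ∀ X f g, ρ X (f * g) = f * ρ X g + g * ρ X f)
    (hbr_skew : ∀ X Y, br X Y = - br Y X)
    (hbr_addl : ∀ X Y Z, br (X + Y) Z = br X Z + br Y Z)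
    (hbr_smul : ∀ (c : ℝ) X Y, br (c • X) Y = c • br X Y)
    (hbr_leib : ∀ X (f : R) Y, br X (f • Y) = f • br X Y + ρ X f • Y)
    (sb : A → A → A)
    (hsb_symm : ∀ X Y, sb X Y = sb Y X)
    (hsb_addl : ∀ X Y Z, sb (X + Y) Z = sb X Z + sb Y Z)
    (hsb_smul : ∀ (c : ℝ) X Y, sb (c • X) Y = c • sb X Y)
    (hsb_leib : ∀ X (f : R) Y, sb X (f • Y) = f • sb X Y + ρ X f • Y)
    (J : A → A)
    (hJ_add : ∀ X Y, J (X + Y) = J X + J Y)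
    (hJ_smul : ∀ (f : R) X, J (f • X) = f • J X)
    (hJ_sq : ∀ X, J (J X) = - X)
    :
    (∀ X (f : R) Y, opP br J X (f • Y)
        = f • opP br J X Y + ρ X f • Y + ρ (J X) f • J Y) ∧
    (∀ X (f : R) Y, opQ sb J X (f • Y)
        = f • opQ sb J X Y + ρ X f • Y - ρ (J X) f • J Y) ∧
    (∀ X Y, (2 : ℝ)⁻¹ • (opP br J X Y + opQ sb J X Y)
        = (2 : ℝ)⁻¹ • (opP br J Y X + opQ sb J Y X)) ∧
    (∀ X Y Z, (2 : ℝ)⁻¹ • (opP br J (X + Y) Z + opQ sb J (X + Y) Z)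
        = (2 : ℝ)⁻¹ • (opP br J X Z + opQ sb J X Z)
          + (2 : ℝ)⁻¹ • (opP br J Y Z + opQ sb J Y Z)) ∧
    (∀ (c : ℝ) X Y, (2 : ℝ)⁻¹ • (opP br J (c • X) Y + opQ sb J (c • X) Y)
        = c • ((2 : ℝ)⁻¹ • (opP br J X Y + opQ sb J X Y))) ∧
    (∀ X (f : R) Y, (2 : ℝ)⁻¹ • (opP br J X (f • Y) + opQ sb J X (f • Y))
        = f • ((2 : ℝ)⁻¹ • (opP br J X Y + opQ sb J X Y)) + ρ X f • Y) := by
  -- auxiliary facts about `J` and the brackets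
  have hJ_smulℝ : ∀ (c : ℝ) (X : A), J (c • X) = c • J X := by
    intro c X
    rw [← algebraMap_smul R c X, hJ_smul, algebraMap_smul]
  have hbr_addr : ∀ X Y Z : A, br X (Y + Z) = br X Y + br X Z := by
    intro X Y Z
    rw [hbr_skew X (Y + Z), hbr_addl, hbr_skew Y X, hbr_skew Z X]
    abel
  have hbr_smulr : ∀ (c : ℝ) (X Y : A), br X (c • Y) = c • br X Y := by
    intro c X Y
    rw [hbr_skew X (c • Y), hbr_smul, hbr_skew Y X, smul_neg, neg_neg]
  have hsb_addr : ∀ X Y Z : A, sb X (Y + Z) = sb X Y + sb X Z := by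
    intro X Y Z
    rw [hsb_symm, hsb_addl, hsb_symm Y X, hsb_symm Z X]
  have hsb_smulr : ∀ (c : ℝ) (X Y : A), sb X (c • Y) = c • sb X Y := by
    intro c X Y
    rw [hsb_symm, hsb_smul, hsb_symm]
  -- Leibniz rule for P
  have hP : ∀ X (f : R) Y, opP br J X (f • Y)
      = f • opP br J X Y + ρ X f • Y + ρ (J X) f • J Y := by
    intro X f Y
    have h2 : br (f • Y) (J X) = f • br Y (J X) - ρ (J X) f • Y := by
      rw [hbr_skew, hbr_leib, hbr_skew (J X) Y]
      module
    have harg : br X (J (f • Y)) + br (f • Y) (J X)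
        = f • (br X (J Y) + br Y (J X)) + (ρ X f • J Y + (- ρ (J X) f) • Y) := by
      rw [hJ_smul, hbr_leib, h2]
      module
    rw [opP, opP, harg, hJ_add, hJ_add, hJ_smul, hJ_smul, hJ_smul, hJ_sq]
    module
  -- Leibniz rule for Q
  have hQ : ∀ X (f : R) Y, opQ sb J X (f • Y)
      = f • opQ sb J X Y + ρ X f • Y - ρ (J X) f • J Y := by
    intro X f Y
    have h2 : sb (f • Y) (J X) = f • sb Y (J X) + ρ (J X) f • Y := by
      rw [hsb_symm, hsb_leib, hsb_symm (J X) Y]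
    have harg : sb X (J (f • Y)) + sb (f • Y) (J X)
        = f • (sb X (J Y) + sb Y (J X)) + (ρ X f • J Y + ρ (J X) f • Y) := by
      rw [hJ_smul, hsb_leib, h2]
      module
    rw [opQ, opQ, harg, hJ_add, hJ_add, hJ_smul, hJ_smul, hJ_smul, hJ_sq]
    module
  refine ⟨hP, hQ, ?_, ?_, ?_, ?_⟩
  · -- symmetry
    intro X Y
    rw [opP, opP, opQ, opQ, add_comm (br X (J Y)), add_comm (sb X (J Y)) (sb Y (J X))]
  · -- additivity in the first argument
    intro X Y Z
    have pb : opP br J (X + Y) Z = opP br J X Z + opP br J Y Z := by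
      rw [opP, opP, opP, hJ_add X Y, hbr_addl, hbr_addr,
        show br X (J Z) + br Y (J Z) + (br Z (J X) + br Z (J Y))
           = (br X (J Z) + br Z (J X)) + (br Y (J Z) + br Z (J Y)) by abel,
        hJ_add]
      abel
    have qb : opQ sb J (X + Y) Z = opQ sb J X Z + opQ sb J Y Z := by
      rw [opQ, opQ, opQ, hJ_add X Y, hsb_addl, hsb_addr,
        show sb X (J Z) + sb Y (J Z) + (sb Z (J X) + sb Z (J Y))
           = (sb X (J Z) + sb Z (J X)) + (sb Y (J Z) + sb Z (J Y)) by abel,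
        hJ_add]
      abel
    rw [pb, qb, ← smul_add]
    congr 1
    abel
  · -- ℝ-homogeneity in the first argument
    intro c X Y
    have pb : opP br J (c • X) Y = c • opP br J X Y := by
      rw [opP, opP, hbr_smul, hJ_smulℝ, hbr_smulr, ← smul_add, hJ_smulℝ, smul_neg]
    have qb : opQ sb J (c • X) Y = c • opQ sb J X Y := by
      rw [opQ, opQ, hsb_smul, hJ_smulℝ, hsb_smulr, ← smul_add, hJ_smulℝ, smul_neg]
    rw [pb, qb, ← smul_add, smul_comm]
  · -- Leibniz rule for ½(P+Q)
    intro X f Y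
    rw [hP, hQ]
    have hv : ∀ v : A, (2:ℝ)⁻¹ • (v + v) = v := by
      intro v
      rw [← two_smul ℝ, smul_smul]
      norm_num
    rw [show f • opP br J X Y + ρ X f • Y + ρ (J X) f • J Y
          + (f • opQ sb J X Y + ρ X f • Y - ρ (J X) f • J Y)
        = f • (opP br J X Y + opQ sb J X Y) + (ρ X f • Y + ρ X f • Y) by module]
    rw [smul_add, hv, smul_comm]
end
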